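/- Given a strict Gelfand-Tsetlin pattern with a_{i,j} > a_{i-1,j}, in the corresponding ice state every horizontal spin in row i strictly between column a_{i,j} and column a_{i-1,j} is +. -/

import Mathlib

/-!
Every admissible vertex conserves lines: `[north = -] + [east = +] = [south = -] + [west = +]`.
Telescoping from the right boundary `H 0 = -`, the spin `H c` is `+` exactly when the row
`i - 1` has one more entry than the row `i` among the columns `< c`. For
`a (i-1) j < c ≤ a i j` interlacing pins these counts down to the entries of index `≥ j`
in row `i - 1` and of index `≥ j + 1` in row `i`.
-/

/-- The six admissible six-vertex configurations, as spins (north, south, west, east),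
`true` = `+`, `false` = `-`. -/
def Adm (nb sb wb eb : Bool) : Prop :=
  (nb, sb, wb, eb) = (true, true, true, true) ∨
  (nb, sb, wb, eb) = (false, true, true, false) ∨
  (nb, sb, wb, eb) = (true, true, false, false) ∨
  (nb, sb, wb, eb) = (false, false, false, false) ∨
  (nb, sb, wb, eb) = (false, false, true, true) ∨
  (nb, sb, wb, eb) = (true, false, false, true)

open Finset

lemma Adm.toNat_add_toNat {n s w e : Bool} (h : Adm n s w e) :
    (!n).toNat + e.toNat = (!s).toNat + w.toNat := by
  rcases h with h | h | h | h | h | h <;> simp only [Prod.mk.injEq] at h <;>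
    obtain ⟨rfl, rfl, rfl, rfl⟩ := h <;> rfl

def minusCount (v : ℕ → Bool) (n : ℕ) : ℕ := #{c ∈ range n | v c = false}

lemma minusCount_succ (v : ℕ → Bool) (n : ℕ) :
    minusCount v (n + 1) = minusCount v n + (!v n).toNat := by
  cases h : v n <;> simp [minusCount, range_add_one, filter_insert, h]

lemma minusCount_eq_add_toNat {north south H : ℕ → Bool} (hH0 : H 0 = false) (n : ℕ)
    (hadm : ∀ c < n, Adm (north c) (south c) (H (c + 1)) (H c)) :
    minusCount north n = minusCount south n + (H n).toNat := by
  induction n with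
  | zero => simp [minusCount, hH0]
  | succ n ih =>
    have hflux := (hadm n n.lt_add_one).toNat_add_toNat
    rw [minusCount_succ, minusCount_succ, ih fun c hc => hadm c (by omega)]
    omega

lemma minusCount_eq_card_filter_lt {v : ℕ → Bool} {f : ℕ → ℕ} {s : Finset ℕ}
    (hf : Set.InjOn f s) {n : ℕ} (hv : ∀ c < n, (v c = false ↔ c ∈ s.image f)) :
    minusCount v n = #{k ∈ s | f k < n} := by
  have : {c ∈ range n | v c = false} = image f {k ∈ s | f k < n} := by
    ext c
    simp only [mem_filter, mem_range, mem_image]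
    constructor
    · rintro ⟨hc, hvc⟩
      obtain ⟨k, hk, rfl⟩ := mem_image.mp ((hv c hc).mp hvc)
      exact ⟨k, ⟨hk, hc⟩, rfl⟩
    · rintro ⟨k, ⟨hk, hkn⟩, rfl⟩
      exact ⟨hkn, (hv _ hkn).mpr (mem_image_of_mem f hk)⟩
  rw [minusCount, this, card_image_of_injOn (hf.mono (coe_subset.mpr (filter_subset _ s)))]

lemma strictAntiOn_Icc_of_succ_lt {f : ℕ → ℕ} {l r : ℕ}
    (hf : ∀ k, l ≤ k → k < r → f (k + 1) < f k) : StrictAntiOn f (Set.Icc l r) :=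
  strictAntiOn_of_succ_lt Set.ordConnected_Icc fun k _ hk hk1 => by
    simp only [Order.succ_eq_add_one, Set.mem_Icc] at hk hk1 ⊢
    exact hf k hk.1 (by omega)

lemma filter_Icc_lt_eq_Icc {f : ℕ → ℕ} {l m r c : ℕ} (hf : AntitoneOn f (Set.Icc l r))
    (hlm : l ≤ m) (hmr : m ≤ r + 1) (hlt : m ≤ r → f m < c)
    (hge : l < m → c ≤ f (m - 1)) :
    {k ∈ Icc l r | f k < c} = Icc m r := by
  ext k
  simp only [mem_filter, mem_Icc]
  constructor
  · rintro ⟨⟨hlk, hkr⟩, hkc⟩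
    refine ⟨?_, hkr⟩
    by_contra! hkm
    have := hf ⟨hlk, hkr⟩ ⟨by omega, by omega⟩ (by omega : k ≤ m - 1)
    have := hge (by omega)
    omega
  · rintro ⟨hmk, hkr⟩
    exact ⟨⟨by omega, hkr⟩,
      (hf ⟨by omega, by omega⟩ ⟨by omega, hkr⟩ hmk).trans_lt (hlt (by omega))⟩

/-- `H c` is the horizontal edge just east of the vertex in column `c`; columns are labeled
right to left, so `H 0` is the right boundary. -/
theorem stmt_3_general (r N : ℕ) (a : ℕ → ℕ → ℕ)
    (hinter : ∀ i j, 1 ≤ i → i ≤ j → j ≤ r → a i j ≤ a (i - 1) (j - 1) ∧ a (i - 1) j ≤ a i j)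
    (hstrict : ∀ i j, i ≤ j → j < r → a i (j + 1) < a i j)
    (hbound : ∀ i j, i ≤ j → j ≤ r → a i j ≤ N)
    (i : ℕ) (hi : 1 ≤ i)
    (north south : ℕ → Bool) (H : ℕ → Bool)
    (hnorth : ∀ c, c ≤ N → (north c = false ↔ ∃ j, i - 1 ≤ j ∧ j ≤ r ∧ c = a (i - 1) j))
    (hsouth : ∀ c, c ≤ N → (south c = false ↔ ∃ j, i ≤ j ∧ j ≤ r ∧ c = a i j))
    (hH0 : H 0 = false)
    (hadm : ∀ c, c ≤ N → Adm (north c) (south c) (H (c + 1)) (H c))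
    (j : ℕ) (hij : i ≤ j) (hjr : j ≤ r) :
    ∀ c, a (i - 1) j < c → c ≤ a i j → H c = true := by
  intro c hc_above hc_le
  have hcN : c ≤ N := hc_le.trans (hbound i j hij hjr)
  have hrow : ∀ l, StrictAntiOn (a l) (Set.Icc l r) := fun l =>
    strictAntiOn_Icc_of_succ_lt fun k hlk hkr => hstrict l k hlk hkr
  have hrow_inj : ∀ l, Set.InjOn (a l) (Icc l r : Set ℕ) := fun l => by
    rw [coe_Icc]
    exact (hrow l).injOn
  have hrow_image :
      ∀ l c, (∃ j, l ≤ j ∧ j ≤ r ∧ c = a l j) ↔ c ∈ (Icc l r).image (a l) :=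
    fun l c => by simp only [mem_image, mem_Icc, and_assoc, eq_comm]
  have hnorth_count : minusCount north c = #(Icc j r) := by
    rw [minusCount_eq_card_filter_lt (hrow_inj (i - 1))
      fun c' hc' => (hnorth c' (by omega)).trans (hrow_image _ _),
      filter_Icc_lt_eq_Icc (hrow (i - 1)).antitoneOn (by omega) (by omega) (fun _ => hc_above)
        fun _ => hc_le.trans (hinter i j hi hij hjr).1]
  have hsouth_count : minusCount south c = #(Icc (j + 1) r) := by
    rw [minusCount_eq_card_filter_lt (hrow_inj i)
      fun c' hc' => (hsouth c' (by omega)).trans (hrow_image _ _),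
      filter_Icc_lt_eq_Icc (hrow i).antitoneOn (by omega) (by omega)
        (fun h => ((hinter i (j + 1) hi (by omega) h).1).trans_lt hc_above) fun _ => hc_le]
  have hflux := minusCount_eq_add_toNat hH0 c fun c' hc' => hadm c' (by omega)
  rw [hnorth_count, hsouth_count, Nat.card_Icc, Nat.card_Icc] at hflux
  have hH : (H c).toNat = 1 := by omega
  simpa using hH

/-- Given a strict Gelfand-Tsetlin pattern with `a_{i,j} > a_{i-1,j}`, in the
corresponding ice state every horizontal spin in (the ice row corresponding to GT row) `i`
strictly between column `a_{i,j}` and column `a_{i-1,j}` is `+`.  Here `north`/`south` are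
the vertical spins above/below the ice row carrying GT rows `i-1` and `i` (minus exactly
at columns that are entries of the corresponding pattern rows), `H c` is the horizontal
edge immediately east of the vertex in column `c` (columns labeled right to left), and
`H 0 = -` is the right boundary. -/
theorem stmt_3 (r N : ℕ) (a : ℕ → ℕ → ℕ)
    (hinter : ∀ i j, 1 ≤ i → i ≤ j → j ≤ r → a i j ≤ a (i - 1) (j - 1) ∧ a (i - 1) j ≤ a i j)
    (hstrict : ∀ i j, i ≤ j → j < r → a i (j + 1) < a i j)
    (hbound : ∀ i j, i ≤ j → j ≤ r → a i j ≤ N)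
    (i : ℕ) (hi : 1 ≤ i) (hir : i ≤ r)
    (north south : ℕ → Bool) (H : ℕ → Bool)
    (hnorth : ∀ c, c ≤ N → (north c = false ↔ ∃ j, i - 1 ≤ j ∧ j ≤ r ∧ c = a (i - 1) j))
    (hsouth : ∀ c, c ≤ N → (south c = false ↔ ∃ j, i ≤ j ∧ j ≤ r ∧ c = a i j))
    (hH0 : H 0 = false)
    (hadm : ∀ c, c ≤ N → Adm (north c) (south c) (H (c + 1)) (H c))
    (j : ℕ) (hij : i ≤ j) (hjr : j ≤ r) (hgt : a (i - 1) j < a i j) :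
    ∀ c, a (i - 1) j < c → c ≤ a i j → H c = true :=
  stmt_3_general r N a hinter hstrict hbound i hi north south H hnorth hsouth hH0 hadm j hij hjr
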